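/- arXiv:2006.14816 — 2 statements merged into one kernel-verified Lean document; each statement's English description precedes it below -/
import Mathlib

section
/- Let V be a finite random variable with {γ = 0} ⊆ {V = 0}, and let X_t = V·1_{t≥γ}. Then X has locally integrable variation, i.e. there exists a sequence of 𝔽-stopping times T_n with T_n ↑ ∞ a.s. such that E(Var(X^{T_n})_∞) < ∞ for each n, if and only if E(|V|·1_{γ≤t}) < ∞ for every t ∈ 𝒯. -/
/-!
A stopping time `T` of the single jump filtration is deterministic before the jump: there is a
constant `c` with `T ≥ γ` on `{γ ≤ c}` and `T ≤ c` on `{γ > c}`. The stopped path `X^T` jumps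
at most once, so `Var(X^T)_∞ = |V| 1_{γ ≤ T, γ < ∞}`. If `T_n → ∞` a.s., some `ω` with
`γ ω ≥ t` (there is one for `t ∈ 𝒯`) forces `c_n ≥ t` for large `n`, whence
`|V| 1_{γ ≤ t} ≤ Var(X^{T_n})_∞`. Conversely, for `t_n ∈ 𝒯` increasing to the essential
supremum of `γ` (and reaching it when it lies in `𝒯`), the stopping times equal to `t_n` on
`{γ > t_n}` and to `∞` elsewhere localize `X`, with `Var(X^{T_n})_∞ = |V| 1_{γ ≤ t_n}`.
-/

open MeasureTheory Filter Set Topology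
open scoped ENNReal NNReal Classical

noncomputable section

namespace SingleJump

variable {Ω : Type*}

/-- The event `{γ > t}`. -/
def jumpSet (γ : Ω → ℝ≥0∞) (t : ℝ≥0) : Set Ω := {ω | (t : ℝ≥0∞) < γ ω}

/-- The collection `𝒻_t` of the single jump filtration generated by `γ` and the σ-field `m`:
`A ∈ 𝒻_t` iff `A` is `m`-measurable and `A ∩ {γ > t}` is either `∅` or `{γ > t}`. -/
def jumpColl (m : MeasurableSpace Ω) (γ : Ω → ℝ≥0∞) (t : ℝ≥0) : Set (Set Ω) :=
  {A | MeasurableSet[m] A ∧ (A ∩ jumpSet γ t = ∅ ∨ A ∩ jumpSet γ t = jumpSet γ t)}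

/-- `𝒻_t` as a σ-field (the collection `jumpColl` generates itself, see Proposition 1(i)). -/
def jumpσ (m : MeasurableSpace Ω) (γ : Ω → ℝ≥0∞) (t : ℝ≥0) : MeasurableSpace Ω :=
  MeasurableSpace.generateFrom (jumpColl m γ t)

/-- `𝒻_∞ = σ(⋃_{t ∈ ℝ₊} 𝒻_t)`. -/
def jumpσInf (m : MeasurableSpace Ω) (γ : Ω → ℝ≥0∞) : MeasurableSpace Ω :=
  ⨆ t : ℝ≥0, jumpσ m γ t

/-- A real function on `ℝ≥0` is càdlàg: right-continuous everywhere, finite left limits. -/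
def Cadlag (f : ℝ≥0 → ℝ) : Prop :=
  (∀ t, ContinuousWithinAt f (Ici t) t) ∧
    ∀ t : ℝ≥0, 0 < t → ∃ c : ℝ, Tendsto f (𝓝[<] t) (𝓝 c)

/-- The filter of times `t ∈ ℝ≥0` with `t ↑ a` strictly from the left (this is `atTop`
when `a = ∞`). -/
def leftF (a : ℝ≥0∞) : Filter ℝ≥0 := Filter.comap (fun t : ℝ≥0 => (t : ℝ≥0∞)) (𝓝[<] a)

/-- Total variation of `f` over `[0,∞)`, including `|f 0|` (the paper's convention `Var`). -/
def totalVar (f : ℝ≥0 → ℝ) : ℝ≥0∞ := (‖f 0‖₊ : ℝ≥0∞) + eVariationOn f Set.univ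

/-- The process `M` stopped at the (possibly infinite) random time `T`. -/
def stopped (M : ℝ≥0 → Ω → ℝ) (T : Ω → ℝ≥0∞) : ℝ≥0 → Ω → ℝ :=
  fun t ω => M (((t : ℝ≥0∞) ⊓ T ω).toNNReal) ω

section WithMeasurableSpace

variable [m : MeasurableSpace Ω]

/-- `Ḡ(t) = 1 - G(t) = P(γ > t)`. -/
def Gbar (μ : Measure Ω) (γ : Ω → ℝ≥0∞) (t : ℝ≥0) : ℝ :=
  (μ {ω | (t : ℝ≥0∞) < γ ω}).toReal

/-- `Ḡ(t-) = P(γ ≥ t)`, the left-hand limit of `Ḡ` at `t`. -/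
def GbarLeft (μ : Measure Ω) (γ : Ω → ℝ≥0∞) (t : ℝ≥0) : ℝ :=
  (μ {ω | (t : ℝ≥0∞) ≤ γ ω}).toReal

/-- `t_G = sup {t ∈ ℝ₊ : G(t) < 1}`, the right endpoint of the law of `γ`. -/
def tG (μ : Measure Ω) (γ : Ω → ℝ≥0∞) : ℝ≥0∞ :=
  sSup ((fun t : ℝ≥0 => (t : ℝ≥0∞)) '' {t : ℝ≥0 | μ {ω | γ ω ≤ (t : ℝ≥0∞)} < 1})

/-- `𝒯 = {t ∈ ℝ₊ : P(γ ≥ t) > 0}`. -/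
def TT (μ : Measure Ω) (γ : Ω → ℝ≥0∞) : Set ℝ≥0 :=
  {t | 0 < μ {ω | (t : ℝ≥0∞) ≤ γ ω}}

/-- Case A: `P(γ = t_G < ∞) = 0`. -/
def CaseA (μ : Measure Ω) (γ : Ω → ℝ≥0∞) : Prop :=
  μ {ω | γ ω = tG μ γ ∧ tG μ γ < ⊤} = 0

/-- Case B: `P(γ = t_G < ∞) > 0`. -/
def CaseB (μ : Measure Ω) (γ : Ω → ℝ≥0∞) : Prop :=
  0 < μ {ω | γ ω = tG μ γ ∧ tG μ γ < ⊤}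

/-- `z ∈ L¹_loc(dG)` : `z` is Borel and `∫_{[0,t]} |z(s)| dG(s) < ∞` for every `t ∈ 𝒯`,
where `dG` is the law of `γ` (a measure on `[0,∞]`). -/
def MemL1loc (μ : Measure Ω) (γ : Ω → ℝ≥0∞) (z : ℝ≥0 → ℝ) : Prop :=
  Measurable z ∧ ∀ t ∈ TT μ γ,
    IntegrableOn (fun x : ℝ≥0∞ => z x.toNNReal) (Icc 0 (t : ℝ≥0∞)) (μ.map γ)

/-- `F loc≪ G` with density `z = dF/dG` : `F(t) = F(0) + ∫_(0,t] z(s) dG(s)` for `t < t_G`. -/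
def LocAC (μ : Measure Ω) (γ : Ω → ℝ≥0∞) (F z : ℝ≥0 → ℝ) : Prop :=
  MemL1loc μ γ z ∧ ∀ t : ℝ≥0, (t : ℝ≥0∞) < tG μ γ →
    F t = F 0 + ∫ x in Ioc (0 : ℝ≥0∞) (t : ℝ≥0∞), z x.toNNReal ∂(μ.map γ)

/-- Condition M for the pair `(F, H)`. -/
def CondM (μ : Measure Ω) (γ : Ω → ℝ≥0∞) (F H : ℝ≥0 → ℝ) : Prop :=
  (∃ z, LocAC μ γ F z) ∧ MemL1loc μ γ H ∧
  (∀ t : ℝ≥0, (t : ℝ≥0∞) < tG μ γ →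
    F t * Gbar μ γ t + ∫ x in Ioc (0 : ℝ≥0∞) (t : ℝ≥0∞), H x.toNNReal ∂(μ.map γ)
      = F 0 * Gbar μ γ 0) ∧
  (CaseB μ γ → Tendsto F (leftF (tG μ γ)) (𝓝 (H (tG μ γ).toNNReal)))

/-- A stopping time of the single jump filtration: `{T ≤ t} ∈ 𝒻_t` for all `t ∈ ℝ₊`. -/
def IsSJStoppingTime (γ : Ω → ℝ≥0∞) (T : Ω → ℝ≥0∞) : Prop :=
  ∀ t : ℝ≥0, {ω | T ω ≤ (t : ℝ≥0∞)} ∈ jumpColl m γ t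

/-- The martingale property on a set `S` of times, w.r.t. the single jump filtration. -/
def MartingaleOn (μ : Measure Ω) (γ : Ω → ℝ≥0∞) (M : ℝ≥0 → Ω → ℝ) (S : Set ℝ≥0) : Prop :=
  (∀ t ∈ S, Measurable[jumpσ m γ t] (M t)) ∧ (∀ t ∈ S, Integrable (M t) μ) ∧
    ∀ s ∈ S, ∀ t ∈ S, s ≤ t → μ[M t|jumpσ m γ s] =ᵐ[μ] M s

/-- A uniformly integrable martingale w.r.t. the single jump filtration. -/
def UIMartingale (μ : Measure Ω) (γ : Ω → ℝ≥0∞) (M : ℝ≥0 → Ω → ℝ) : Prop :=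
  MartingaleOn μ γ M Set.univ ∧ UniformIntegrable M 1 μ

/-- A local martingale w.r.t. the single jump filtration: adapted, a.s. càdlàg paths, and
there are stopping times `T n ↑ ∞` a.s. with each stopped process a UI martingale. -/
def LocalMartingale (μ : Measure Ω) (γ : Ω → ℝ≥0∞) (M : ℝ≥0 → Ω → ℝ) : Prop :=
  (∀ t : ℝ≥0, Measurable[jumpσ m γ t] (M t)) ∧
  (∀ᵐ ω ∂μ, Cadlag fun t => M t ω) ∧
  ∃ T : ℕ → Ω → ℝ≥0∞,
    (∀ n, IsSJStoppingTime γ (T n)) ∧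
    (∀ᵐ ω ∂μ, Monotone (fun n => T n ω) ∧ Tendsto (fun n => T n ω) atTop (𝓝 (⊤ : ℝ≥0∞))) ∧
    ∀ n, UIMartingale μ γ (stopped M (T n))

/-- `E[L' | γ] = 0` for a (possibly only locally integrable) random variable `L'`. -/
def CondZeroGivenGamma (μ : Measure Ω) (γ : Ω → ℝ≥0∞) (L' : Ω → ℝ) : Prop :=
  ∀ B : Set ℝ≥0∞, MeasurableSet B → IntegrableOn L' (γ ⁻¹' B) μ →
    ∫ ω in γ ⁻¹' B, L' ω ∂μ = 0

end WithMeasurableSpace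

lemma eVariationOn_univ_le_of_monotone {α : Type*} [LinearOrder α] {f : α → ℝ}
    (hf : Monotone f) {a b : ℝ} (ha : ∀ x, a ≤ f x) (hb : ∀ x, f x ≤ b) :
    eVariationOn f univ ≤ ENNReal.ofReal (b - a) := by
  rw [eVariationOn.eq_biSup_inter_Icc]
  refine iSup₂_le fun p _ => ?_
  rw [(hf.monotoneOn univ).eVariationOn_eq (mem_univ _) (mem_univ _)]
  exact ENNReal.ofReal_le_ofReal (by linarith [ha p.1, hb p.2])

lemma enorm_le_totalVar (f : ℝ≥0 → ℝ) (s : ℝ≥0) : ‖f s‖ₑ ≤ totalVar f := by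
  calc ‖f s‖ₑ = edist (f s) 0 := (edist_zero_right _).symm
    _ ≤ edist (f s) (f 0) + edist (f 0) 0 := edist_triangle _ _ _
    _ ≤ eVariationOn f univ + ‖f 0‖ₑ := by
      rw [edist_zero_right]
      gcongr
      exact eVariationOn.edist_le f (mem_univ s) (mem_univ 0)
    _ = totalVar f := by rw [totalVar, add_comm, enorm_eq_nnnorm]

def jumpAt (a : ℝ≥0∞) (v : ℝ) (t : ℝ≥0) : ℝ := if (t : ℝ≥0∞) < a then 0 else v

lemma monotone_jumpAt_one (a : ℝ≥0∞) : Monotone (jumpAt a 1) := by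
  intro s t hst
  unfold jumpAt
  split_ifs with hs ht ht
  · rfl
  · exact zero_le_one
  · exact absurd ((ENNReal.coe_le_coe.2 hst).trans_lt ht) hs
  · rfl

lemma eVariationOn_jumpAt_le (a : ℝ≥0∞) (v : ℝ) : eVariationOn (jumpAt a v) univ ≤ ‖v‖ₑ := by
  have hone : eVariationOn (jumpAt a 1) univ ≤ 1 := by
    simpa using eVariationOn_univ_le_of_monotone (monotone_jumpAt_one a) (a := 0) (b := 1)
      (fun t => by unfold jumpAt; split_ifs <;> norm_num)
      (fun t => by unfold jumpAt; split_ifs <;> norm_num)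
  have hsmul : jumpAt a v = (v • ·) ∘ jumpAt a 1 := by
    funext t; simp only [Function.comp, jumpAt]; split_ifs <;> simp
  calc eVariationOn (jumpAt a v) univ
      ≤ ‖v‖₊ * eVariationOn (jumpAt a 1) univ := by
        rw [hsmul]
        exact (lipschitzWith_smul v).lipschitzOnWith.comp_eVariationOn_le (mapsTo_univ _ _)
    _ ≤ ‖v‖ₑ := by
        rw [enorm_eq_nnnorm]
        exact mul_le_of_le_one_right' hone

lemma totalVar_jumpAt {a : ℝ≥0∞} {v : ℝ} (h0 : a = 0 → v = 0) :
    totalVar (jumpAt a v) = if a = ⊤ then 0 else ‖v‖ₑ := by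
  split_ifs with ha
  · have hzero : jumpAt a v = fun _ => 0 := funext fun t => if_pos (ha ▸ ENNReal.coe_lt_top)
    simp [totalVar, hzero, eVariationOn.constant_on]
  · refine le_antisymm ?_ ?_
    · have hstart : jumpAt a v 0 = 0 := by
        unfold jumpAt
        split_ifs with h
        · rfl
        · exact h0 (by simpa using h)
      rw [totalVar, hstart, nnnorm_zero, ENNReal.coe_zero, zero_add]
      exact eVariationOn_jumpAt_le a v
    · calc ‖v‖ₑ = ‖jumpAt a v a.toNNReal‖ₑ := by simp [jumpAt, ENNReal.coe_toNNReal ha]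
        _ ≤ totalVar (jumpAt a v) := enorm_le_totalVar _ _

lemma stopped_jumpAt (γ : Ω → ℝ≥0∞) (V : Ω → ℝ) (T : Ω → ℝ≥0∞) (ω : Ω) :
    (fun t => stopped (fun t ω => jumpAt (γ ω) (V ω) t) T t ω)
      = jumpAt (if γ ω ≤ T ω then γ ω else ⊤) (V ω) := by
  funext t
  have hne : (t : ℝ≥0∞) ⊓ T ω ≠ ⊤ := ne_top_of_le_ne_top ENNReal.coe_ne_top inf_le_left
  simp only [stopped, jumpAt, ENNReal.coe_toNNReal hne, inf_lt_iff]
  split_ifs <;> simp_all [not_lt.2]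

lemma totalVar_stopped_jumpAt {γ : Ω → ℝ≥0∞} {V : Ω → ℝ} (hV0 : ∀ ω, γ ω = 0 → V ω = 0)
    (T : Ω → ℝ≥0∞) (ω : Ω) :
    totalVar (fun t => stopped (fun t ω => jumpAt (γ ω) (V ω) t) T t ω)
      = ‖{ω | γ ω ≤ T ω ∧ γ ω ≠ ⊤}.indicator V ω‖ₑ := by
  rw [stopped_jumpAt, totalVar_jumpAt]
  · by_cases h : γ ω ≤ T ω <;> by_cases h' : γ ω = ⊤ <;> simp [h, h']
  · split_ifs
    exacts [hV0 ω, fun h => absurd h ENNReal.top_ne_zero]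

def thresholdTime (γ : Ω → ℝ≥0∞) (c : ℝ≥0∞) (ω : Ω) : ℝ≥0∞ := if c < γ ω then c else ⊤

lemma le_thresholdTime (γ : Ω → ℝ≥0∞) (c : ℝ≥0∞) (ω : Ω) : c ≤ thresholdTime γ c ω := by
  unfold thresholdTime
  split_ifs
  exacts [le_rfl, le_top]

lemma thresholdTime_of_le {γ : Ω → ℝ≥0∞} {c : ℝ≥0∞} {ω : Ω} (h : γ ω ≤ c) :
    thresholdTime γ c ω = ⊤ :=
  if_neg (not_lt.2 h)

lemma monotone_thresholdTime (γ : Ω → ℝ≥0∞) (ω : Ω) : Monotone fun c => thresholdTime γ c ω := by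
  intro c c' hcc'
  by_cases h : c' < γ ω
  · simp only [thresholdTime, if_pos h, if_pos (hcc'.trans_lt h), hcc']
  · simp only [thresholdTime, if_neg h, le_top]

lemma setOf_le_thresholdTime_and_ne_top (γ : Ω → ℝ≥0∞) (c : ℝ≥0) :
    {ω | γ ω ≤ thresholdTime γ c ω ∧ γ ω ≠ ⊤} = {ω | γ ω ≤ c} := by
  ext ω
  by_cases h : γ ω ≤ c
  · simp [h, thresholdTime_of_le h, ne_top_of_le_ne_top ENNReal.coe_ne_top h]
  · simp [h, thresholdTime, not_le.1 h]

section WithMeasurableSpace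

variable [m : MeasurableSpace Ω]

lemma IsSJStoppingTime.exists_threshold {γ T : Ω → ℝ≥0∞} (hT : IsSJStoppingTime γ T) :
    ∃ c : ℝ≥0∞, ∀ ω, (γ ω ≤ c → γ ω ≤ T ω) ∧ (c < γ ω → T ω ≤ c) := by
  -- `c` is the infimum of the times `u` by which `T` has occurred on all of `{γ > u}`; for
  -- `u < c` the dichotomy in `𝒻_u` says that `T` has occurred nowhere on `{γ > u}`.
  set S := {u : ℝ≥0 | jumpSet γ u ⊆ {ω | T ω ≤ u}}
  refine ⟨⨅ u ∈ S, (u : ℝ≥0∞), fun ω => ⟨fun hγc => ?_, fun hcγ => ?_⟩⟩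
  · refine ENNReal.le_of_forall_nnreal_lt fun r hr => le_of_lt (not_le.1 fun hTr => ?_)
    have hrS : r ∈ S := by
      rcases (hT r).2 with h | h
      · exact absurd (h ▸ (⟨hTr, hr⟩ : ω ∈ {ω | T ω ≤ r} ∩ jumpSet γ r)) (notMem_empty ω)
      · exact inter_eq_right.1 h
    exact (hr.trans_le hγc).not_ge (biInf_le _ hrS)
  · by_contra! hcT
    obtain ⟨r, hcr, hr⟩ := ENNReal.lt_iff_exists_nnreal_btwn.1 (lt_inf_iff.2 ⟨hcT, hcγ⟩)
    obtain ⟨u, huS, hur⟩ : ∃ u ∈ S, (u : ℝ≥0∞) < r := by simpa [iInf_lt_iff] using hcr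
    have hTu : T ω ≤ u := huS (hur.trans (hr.trans_le inf_le_right))
    exact (hTu.trans_lt (hur.trans (hr.trans_le inf_le_left))).false

lemma isSJStoppingTime_thresholdTime {γ : Ω → ℝ≥0∞} (hγ : Measurable γ) (c : ℝ≥0∞) :
    IsSJStoppingTime γ (thresholdTime γ c) := by
  intro u
  by_cases hcu : c ≤ u
  · have hset : {ω | thresholdTime γ c ω ≤ u} = {ω | c < γ ω} := by
      ext ω
      by_cases h : c < γ ω <;> simp [thresholdTime, h, hcu]
    rw [hset]
    exact ⟨hγ measurableSet_Ioi, Or.inr (inter_eq_right.2 fun ω hω => hcu.trans_lt hω)⟩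
  · have hset : {ω | thresholdTime γ c ω ≤ u} = ∅ := by
      ext ω
      by_cases h : c < γ ω <;> simp [thresholdTime, h, hcu]
    rw [hset]
    exact ⟨MeasurableSet.empty, Or.inl (empty_inter _)⟩

variable {μ : Measure Ω} {γ : Ω → ℝ≥0∞}

lemma exists_le_stoppingTime_of_mem_TT {T : ℕ → Ω → ℝ≥0∞} (hT : ∀ n, IsSJStoppingTime γ (T n))
    (hlim : ∀ᵐ ω ∂μ, Tendsto (fun n => T n ω) atTop (𝓝 ⊤)) {t : ℝ≥0} (ht : t ∈ TT μ γ) :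
    ∃ n, ∀ ω, γ ω ≤ t → γ ω ≤ T n ω := by
  choose c hc using fun n => (hT n).exists_threshold
  obtain ⟨ω, htγ, hω⟩ := ((frequently_ae_iff.2 (ne_of_gt ht)).and_eventually hlim).exists
  obtain ⟨n, hn⟩ := (hω.eventually (lt_mem_nhds ENNReal.coe_lt_top)).exists
  refine ⟨n, fun ω' hω' => (hc n ω').1 (hω'.trans ?_)⟩
  by_contra! hct
  -- otherwise `t < T n ω ≤ c n < t`, since `ω ∈ {γ ≥ t} ⊆ {γ > c n}`
  exact (hn.trans_le ((hc n ω).2 (hct.trans_le htγ))).not_ge hct.le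

lemma mem_TT_of_lt_essSup {t : ℝ≥0} (ht : (t : ℝ≥0∞) < essSup γ μ) : t ∈ TT μ γ := by
  refine pos_iff_ne_zero.2 fun (h0 : μ {ω | (t : ℝ≥0∞) ≤ γ ω} = 0) => ht.not_ge (essSup_le_of_ae_le _ ?_)
  filter_upwards [ae_iff.2 (by simpa using h0 : μ {ω | ¬ γ ω < t} = 0)] with ω hω
  exact hω.le

lemma exists_monotone_seq_mem_TT (μ : Measure Ω) [NeZero μ] (γ : Ω → ℝ≥0∞) :
    ∃ ts : ℕ → ℝ≥0, Monotone ts ∧ (∀ n, ts n ∈ TT μ γ) ∧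
      (Tendsto ts atTop atTop ∨ ∀ᵐ ω ∂μ, ∃ n, γ ω ≤ ts n) := by
  rcases eq_top_or_lt_top (essSup γ μ) with htop | hfin
  · exact ⟨Nat.cast, Nat.mono_cast, fun n => mem_TT_of_lt_essSup (htop ▸ ENNReal.coe_lt_top),
      Or.inl tendsto_natCast_atTop_atTop⟩
  obtain ⟨s, hs⟩ : ∃ s : ℝ≥0, essSup γ μ = s := ⟨_, (ENNReal.coe_toNNReal hfin.ne).symm⟩
  by_cases hsTT : s ∈ TT μ γ
  · exact ⟨fun _ => s, monotone_const, fun _ => hsTT,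
      Or.inr ((ENNReal.ae_le_essSup γ).mono fun ω h => ⟨0, hs ▸ h⟩)⟩
  have hlt : ∀ᵐ ω ∂μ, γ ω < s := ae_iff.2 (by simpa [TT] using hsTT)
  obtain ⟨ω₀, hω₀⟩ := hlt.exists
  obtain ⟨ts, hts, hmem, hlim⟩ :=
    exists_seq_strictMono_tendsto' (ENNReal.coe_pos.1 (pos_of_gt hω₀))
  refine ⟨ts, hts.monotone, fun n => mem_TT_of_lt_essSup (hs ▸ ENNReal.coe_lt_coe.2 (hmem n).2),
    Or.inr ?_⟩
  filter_upwards [hlt] with ω hω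
  obtain ⟨r, hγr, hrs⟩ := ENNReal.lt_iff_exists_nnreal_btwn.1 hω
  obtain ⟨n, hn⟩ := (hlim.eventually (lt_mem_nhds (ENNReal.coe_lt_coe.1 hrs))).exists
  exact ⟨n, hγr.le.trans (ENNReal.coe_le_coe.2 hn.le)⟩

lemma ae_monotone_tendsto_thresholdTime {ts : ℕ → ℝ≥0} (hts : Monotone ts)
    (hcover : Tendsto ts atTop atTop ∨ ∀ᵐ ω ∂μ, ∃ n, γ ω ≤ ts n) :
    ∀ᵐ ω ∂μ, Monotone (fun n => thresholdTime γ (ts n) ω) ∧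
      Tendsto (fun n => thresholdTime γ (ts n) ω) atTop (𝓝 ⊤) := by
  have hmono : ∀ ω, Monotone fun n => thresholdTime γ (ts n) ω := fun ω =>
    (monotone_thresholdTime γ ω).comp (ENNReal.coe_mono.comp hts)
  rcases hcover with htop | hae
  · exact ae_of_all _ fun ω => ⟨hmono ω, tendsto_nhds_top_mono
      (ENNReal.tendsto_coe_nhds_top.2 htop) (Eventually.of_forall fun n => le_thresholdTime _ _ _)⟩
  · filter_upwards [hae] with ω ⟨n, hn⟩
    exact ⟨hmono ω, tendsto_const_nhds.congr' (eventually_atTop.2 ⟨n, fun k hk =>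
      (thresholdTime_of_le (hn.trans (ENNReal.coe_le_coe.2 (hts hk)))).symm⟩)⟩

theorem stmt_17_general (μ : Measure Ω) [IsProbabilityMeasure μ] (γ : Ω → ℝ≥0∞)
    (hγ : Measurable γ)
    (V : Ω → ℝ) (hV : Measurable V) (hV0 : ∀ ω, γ ω = 0 → V ω = 0)
    (X : ℝ≥0 → Ω → ℝ)
    (hX : X = fun (t : ℝ≥0) (ω : Ω) => if (t : ℝ≥0∞) < γ ω then 0 else V ω) :
    (∃ T : ℕ → Ω → ℝ≥0∞,
        (∀ n, IsSJStoppingTime γ (T n)) ∧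
        (∀ᵐ ω ∂μ, Monotone (fun n => T n ω) ∧
          Tendsto (fun n => T n ω) atTop (𝓝 (⊤ : ℝ≥0∞))) ∧
        ∀ n, ∫⁻ ω, totalVar (fun t => stopped X (T n) t ω) ∂μ < ⊤) ↔
      (∀ t ∈ TT μ γ,
        Integrable (fun ω => ({ω' | γ ω' ≤ (t : ℝ≥0∞)}.indicator V) ω) μ) := by
  replace hX : X = fun t ω => jumpAt (γ ω) (V ω) t := hX
  subst hX
  constructor
  · rintro ⟨T, hT, hTae, hTvar⟩ t ht
    obtain ⟨n, hn⟩ := exists_le_stoppingTime_of_mem_TT hT (hTae.mono fun _ h => h.2) ht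
    refine ⟨(hV.indicator (hγ measurableSet_Iic)).aestronglyMeasurable,
      (lintegral_mono fun ω => ?_).trans_lt (hTvar n)⟩
    have hsub : {ω | γ ω ≤ t} ⊆ {ω | γ ω ≤ T n ω ∧ γ ω ≠ ⊤} := fun ω' h =>
      ⟨hn ω' h, ne_top_of_le_ne_top ENNReal.coe_ne_top h⟩
    rw [totalVar_stopped_jumpAt hV0]
    exact enorm_indicator_le_of_subset hsub V ω
  · intro hInt
    obtain ⟨ts, hts, hmem, hcover⟩ := exists_monotone_seq_mem_TT μ γ
    refine ⟨fun n => thresholdTime γ (ts n), fun n => isSJStoppingTime_thresholdTime hγ _,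
      ae_monotone_tendsto_thresholdTime hts hcover, fun n => ?_⟩
    simp_rw [totalVar_stopped_jumpAt hV0, setOf_le_thresholdTime_and_ne_top]
    exact (hInt _ (hmem n)).2

/-- **Lemma 1.** For `X_t = V·1_{t≥γ}` with `{γ = 0} ⊆ {V = 0}`, the process `X` has
locally integrable variation iff `E(|V|·1_{γ≤t}) < ∞` for every `t ∈ 𝒯`. -/
theorem stmt_17 (μ : Measure Ω) [IsProbabilityMeasure μ] (γ : Ω → ℝ≥0∞)
    (hγ : Measurable γ) (hpos : 0 < μ {ω | 0 < γ ω})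
    (V : Ω → ℝ) (hV : Measurable V) (hV0 : ∀ ω, γ ω = 0 → V ω = 0)
    (X : ℝ≥0 → Ω → ℝ)
    (hX : X = fun (t : ℝ≥0) (ω : Ω) => if (t : ℝ≥0∞) < γ ω then 0 else V ω) :
    (∃ T : ℕ → Ω → ℝ≥0∞,
        (∀ n, IsSJStoppingTime γ (T n)) ∧
        (∀ᵐ ω ∂μ, Monotone (fun n => T n ω) ∧
          Tendsto (fun n => T n ω) atTop (𝓝 (⊤ : ℝ≥0∞))) ∧
        ∀ n, ∫⁻ ω, totalVar (fun t => stopped X (T n) t ω) ∂μ < ⊤) ↔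
      (∀ t ∈ TT μ γ,
        Integrable (fun ω => ({ω' | γ ω' ≤ (t : ℝ≥0∞)}.indicator V) ω) μ) :=
  stmt_17_general μ γ hγ V hV hV0 X hX

end WithMeasurableSpace

end SingleJump
end
end

section
/- Let L be an integrable random variable on (Ω, 𝒻, P). Then for every t ∈ ℝ₊ with P(γ > t) > 0 and t < t_G, the conditional expectation E[L | 𝒻_t] equals, P-a.s., the random variable taking the constant value E(L·1_{γ>t}) / P(γ > t) on the set {γ > t} and equal to L on the set {γ ≤ t}; and for every t ∈ ℝ₊ with P(γ > t) = 0, E[L | 𝒻_t] = L P-a.s. Consequently, the process M_t = F(t)·1_{t<γ} + L·1_{t≥γ}, with F(t) = E(L·1_{γ>t}) / Ḡ(t) for t < t_G and F(t) = 0 for t ≥ t_G, is a modification of the martingale (E[L | 𝒻_t])_{t ∈ ℝ₊}. -/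
open MeasureTheory Filter Set Topology
open scoped ENNReal NNReal Classical

noncomputable section

namespace SingleJump

variable {Ω : Type*}

section WithMeasurableSpace

variable [m : MeasurableSpace Ω]

/-! A set in `𝒻_t` either contains `{γ > t}` or misses it, so an `𝒻_t`-measurable function is
constant on `{γ > t}`; testing the defining identity of `E[L | 𝒻_t]` on `{γ > t}` and on the
subsets of `{γ ≤ t}` shows that it is `L` off `{γ > t}` and the mean of `L` over `{γ > t}` on it.
By right-continuity of `Ḡ`, `P(γ > t) > 0` forces `t < t_G`, so beyond `t_G` the set `{γ > t}`
is null and the value `0` put there by `M_t` is irrelevant. -/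


section JumpFiltration

variable {γ : Ω → ℝ≥0∞} {t : ℝ≥0}

lemma measurableSet_jumpSet (hγ : Measurable γ) (t : ℝ≥0) : MeasurableSet (jumpSet γ t) :=
  hγ measurableSet_Ioi

lemma jumpσ_le (γ : Ω → ℝ≥0∞) (t : ℝ≥0) : jumpσ m γ t ≤ m :=
  MeasurableSpace.generateFrom_le fun _ hA => hA.1

lemma disjoint_or_subset_of_measurableSet_jumpσ {A : Set Ω}
    (hA : MeasurableSet[jumpσ m γ t] A) : Disjoint A (jumpSet γ t) ∨ jumpSet γ t ⊆ A := by
  induction A, hA using MeasurableSpace.generateFrom_induction with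
  | hC A hA _ => simpa [Set.disjoint_iff_inter_eq_empty, Set.inter_eq_right] using hA.2
  | empty => exact Or.inl (Set.empty_disjoint _)
  | compl A _ hA =>
    exact hA.symm.imp Set.disjoint_compl_left_iff_subset.2 Set.subset_compl_iff_disjoint_left.2
  | iUnion s _ hs =>
    by_cases h : ∃ n, jumpSet γ t ⊆ s n
    · obtain ⟨n, hn⟩ := h
      exact Or.inr (hn.trans (Set.subset_iUnion s n))
    · exact Or.inl (Set.disjoint_iUnion_left.2 fun n => (hs n).resolve_right (not_exists.1 h n))

lemma measurableSet_jumpσ_jumpSet (hγ : Measurable γ) (t : ℝ≥0) :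
    MeasurableSet[jumpσ m γ t] (jumpSet γ t) :=
  MeasurableSpace.measurableSet_generateFrom
    ⟨measurableSet_jumpSet hγ t, Or.inr (Set.inter_self _)⟩

lemma measurableSet_jumpσ_of_disjoint {A : Set Ω} (hA : MeasurableSet A)
    (hdisj : Disjoint A (jumpSet γ t)) : MeasurableSet[jumpσ m γ t] A :=
  MeasurableSpace.measurableSet_generateFrom
    ⟨hA, Or.inl (Set.disjoint_iff_inter_eq_empty.1 hdisj)⟩

lemma measurable_jumpσ_ite (hγ : Measurable γ) (c : ℝ) {f : Ω → ℝ} (hf : Measurable f) :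
    Measurable[jumpσ m γ t] (fun ω => if (t : ℝ≥0∞) < γ ω then c else f ω) := by
  intro B hB
  have hpre : (fun ω => if (t : ℝ≥0∞) < γ ω then c else f ω) ⁻¹' B
      = (if c ∈ B then jumpSet γ t else ∅) ∪ ((jumpSet γ t)ᶜ ∩ f ⁻¹' B) := by
    ext ω
    by_cases h : (t : ℝ≥0∞) < γ ω <;> by_cases hc : c ∈ B <;> simp [h, hc, jumpSet]
  rw [hpre]
  refine MeasurableSet.union ?_ (measurableSet_jumpσ_of_disjoint
    ((measurableSet_jumpSet hγ t).compl.inter (hf hB)) (disjoint_compl_left.mono_left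
      Set.inter_subset_left))
  split_ifs
  exacts [measurableSet_jumpσ_jumpSet hγ t, (jumpσ m γ t).measurableSet_empty]

lemma condExp_jumpσ_ae_eq (μ : Measure Ω) [IsFiniteMeasure μ] (hγ : Measurable γ) {L : Ω → ℝ}
    (hL : Integrable L μ) (t : ℝ≥0) :
    μ[L|jumpσ m γ t] =ᵐ[μ] fun ω => if (t : ℝ≥0∞) < γ ω
      then (∫ ω' in jumpSet γ t, L ω' ∂μ) / μ.real (jumpSet γ t) else L ω := by
  set J := jumpSet γ t
  set c := (∫ ω in J, L ω ∂μ) / μ.real J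
  set g : Ω → ℝ := fun ω => if (t : ℝ≥0∞) < γ ω then c else L ω
  have hJ : MeasurableSet J := measurableSet_jumpSet hγ t
  -- with the convention `x / 0 = 0`, this holds also when `μ J = 0`
  have hc : μ.real J * c = ∫ ω in J, L ω ∂μ := by
    rcases eq_or_ne (μ.real J) 0 with h | h
    · rw [h, zero_mul,
        setIntegral_measure_zero _ ((measureReal_eq_zero_iff (measure_ne_top μ J)).1 h)]
    · exact mul_div_cancel₀ _ h
  have hgm : AEStronglyMeasurable[jumpσ m γ t] g μ := by
    refine (measurable_jumpσ_ite hγ c hL.1.measurable_mk).aestronglyMeasurable.congr ?_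
    filter_upwards [hL.1.ae_eq_mk] with ω hω
    simp only [g, hω]
  have hg : Integrable g μ := by
    refine (Integrable.piecewise hJ (integrable_const c).integrableOn hL.integrableOn).congr
      (.of_forall fun ω => ?_)
    by_cases h : (t : ℝ≥0∞) < γ ω <;> simp [Set.piecewise, g, J, jumpSet, h]
  refine (ae_eq_condExp_of_forall_setIntegral_eq (jumpσ_le γ t) hL
    (fun _ _ _ => hg.integrableOn) (fun s hs _ => ?_) hgm).symm
  have hsm := jumpσ_le γ t s hs
  have hdiff : ∫ ω in s \ J, g ω ∂μ = ∫ ω in s \ J, L ω ∂μ :=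
    setIntegral_congr_fun (hsm.diff hJ) fun ω hω => if_neg hω.2
  have hjump : ∫ ω in J, g ω ∂μ = ∫ ω in J, L ω ∂μ :=
    calc ∫ ω in J, g ω ∂μ = ∫ _ in J, c ∂μ := setIntegral_congr_fun hJ fun ω hω => if_pos hω
      _ = ∫ ω in J, L ω ∂μ := by rw [setIntegral_const, smul_eq_mul, hc]
  rw [← integral_inter_add_sdiff hJ hg.integrableOn, ← integral_inter_add_sdiff hJ hL.integrableOn,
    hdiff]
  congr 1
  rcases disjoint_or_subset_of_measurableSet_jumpσ hs with hdisj | hsub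
  · rw [Set.disjoint_iff_inter_eq_empty.1 hdisj, Measure.restrict_empty, integral_zero_measure,
      integral_zero_measure]
  · rw [Set.inter_eq_right.2 hsub, hjump]

lemma measure_jumpSet_eq_zero_of_tG_le (μ : Measure Ω) [IsProbabilityMeasure μ]
    (hγ : Measurable γ) (h : tG μ γ ≤ t) : μ (jumpSet γ t) = 0 := by
  have hnull : ∀ s : ℝ≥0, t < s → μ (jumpSet γ s) = 0 := by
    intro s hts
    have hs : ¬ μ {ω | γ ω ≤ (s : ℝ≥0∞)} < 1 := fun hs =>
      ((le_sSup (Set.mem_image_of_mem _ hs) : (s : ℝ≥0∞) ≤ tG μ γ).trans h).not_gt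
        (ENNReal.coe_lt_coe.2 hts)
    have hcompl : (jumpSet γ s)ᶜ = {ω | γ ω ≤ (s : ℝ≥0∞)} := by
      ext ω
      simp [jumpSet]
    rw [← prob_compl_eq_one_iff (measurableSet_jumpSet hγ s), hcompl]
    exact le_antisymm prob_le_one (not_lt.1 hs)
  -- right-continuity: `{γ > t}` is the increasing union of the `{γ > u n}` with `u n ↓ t`
  obtain ⟨u, -, htu, hu⟩ := exists_seq_strictAnti_tendsto t
  have hunion : jumpSet γ t ⊆ ⋃ n, jumpSet γ (u n) := fun ω hω =>
    Set.mem_iUnion.2 ((ENNReal.tendsto_coe.2 hu).eventually (gt_mem_nhds hω)).exists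
  exact measure_mono_null hunion (measure_iUnion_null fun n => hnull _ (htu n))

end JumpFiltration

theorem stmt_19_general (μ : Measure Ω) [IsProbabilityMeasure μ] (γ : Ω → ℝ≥0∞)
    (hγ : Measurable γ)
    (L : Ω → ℝ) (hL : Integrable L μ) :
    (∀ t : ℝ≥0, 0 < μ {ω | (t : ℝ≥0∞) < γ ω} → (t : ℝ≥0∞) < tG μ γ →
      μ[L|jumpσ m γ t] =ᵐ[μ]
        fun ω => if (t : ℝ≥0∞) < γ ω
          then (∫ ω' in {ω' | (t : ℝ≥0∞) < γ ω'}, L ω' ∂μ) / Gbar μ γ t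
          else L ω) ∧
    (∀ t : ℝ≥0, μ {ω | (t : ℝ≥0∞) < γ ω} = 0 → μ[L|jumpσ m γ t] =ᵐ[μ] L) ∧
    (∀ t : ℝ≥0,
      (fun ω => if (t : ℝ≥0∞) < γ ω
          then (if (t : ℝ≥0∞) < tG μ γ
            then (∫ ω' in {ω' | (t : ℝ≥0∞) < γ ω'}, L ω' ∂μ) / Gbar μ γ t else 0)
          else L ω)
        =ᵐ[μ] μ[L|jumpσ m γ t]) := by
  have hcond (t : ℝ≥0) := condExp_jumpσ_ae_eq μ hγ hL t
  have hnull (t : ℝ≥0) (ht : μ (jumpSet γ t) = 0) : μ[L|jumpσ m γ t] =ᵐ[μ] L := by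
    filter_upwards [hcond t, measure_eq_zero_iff_ae_notMem.1 ht] with
      ω hω (hωt : ¬ (t : ℝ≥0∞) < γ ω)
    rw [hω, if_neg hωt]
  refine ⟨fun t _ _ => hcond t, hnull, fun t => ?_⟩
  by_cases htG : (t : ℝ≥0∞) < tG μ γ
  · rw [if_pos htG]
    exact (hcond t).symm
  · have ht := measure_jumpSet_eq_zero_of_tG_le μ hγ (not_lt.1 htG)
    filter_upwards [hnull t ht, measure_eq_zero_iff_ae_notMem.1 ht] with
      ω hω (hωt : ¬ (t : ℝ≥0∞) < γ ω)
    rw [hω, if_neg hωt]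

/-- For an integrable `L`: if `P(γ > t) > 0` and `t < t_G` then `E[L | 𝒻_t]` equals a.s.
`E(L·1_{γ>t})/P(γ>t)` on `{γ > t}` and `L` on `{γ ≤ t}`; if `P(γ > t) = 0` then
`E[L | 𝒻_t] = L` a.s. Consequently `M_t = F(t)·1_{t<γ} + L·1_{t≥γ}`, with
`F(t) = E(L·1_{γ>t})/Ḡ(t)` for `t < t_G` and `F(t) = 0` otherwise, is a modification of
the martingale `(E[L | 𝒻_t])`. -/
theorem stmt_19 (μ : Measure Ω) [IsProbabilityMeasure μ] (γ : Ω → ℝ≥0∞)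
    (hγ : Measurable γ) (hpos : 0 < μ {ω | 0 < γ ω})
    (L : Ω → ℝ) (hL : Integrable L μ) :
    (∀ t : ℝ≥0, 0 < μ {ω | (t : ℝ≥0∞) < γ ω} → (t : ℝ≥0∞) < tG μ γ →
      μ[L|jumpσ m γ t] =ᵐ[μ]
        fun ω => if (t : ℝ≥0∞) < γ ω
          then (∫ ω' in {ω' | (t : ℝ≥0∞) < γ ω'}, L ω' ∂μ) / Gbar μ γ t
          else L ω) ∧
    (∀ t : ℝ≥0, μ {ω | (t : ℝ≥0∞) < γ ω} = 0 → μ[L|jumpσ m γ t] =ᵐ[μ] L) ∧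
    (∀ t : ℝ≥0,
      (fun ω => if (t : ℝ≥0∞) < γ ω
          then (if (t : ℝ≥0∞) < tG μ γ
            then (∫ ω' in {ω' | (t : ℝ≥0∞) < γ ω'}, L ω' ∂μ) / Gbar μ γ t else 0)
          else L ω)
        =ᵐ[μ] μ[L|jumpσ m γ t]) :=
  stmt_19_general μ γ hγ L hL

end WithMeasurableSpace

end SingleJump
end
end
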